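/- Let d₁, d₂ be nonzero integers, let g = gcd(d₁,d₂) > 0, and let m, n be integers with m·d₁ + n·d₂ = g. Then there exists a ℤ-module isomorphism φ from the quotient of ℤ² by the image of the linear map given by the matrix M = [[d₂, d₁], [0, d₂]] onto (ℤ/gℤ) × (ℤ/(d₂²/g)ℤ) such that φ sends the class of the first standard basis vector (1,0) to (1 mod g, −(m·d₂/g) mod (d₂²/g)) and sends the class of the second standard basis vector (0,1) to (0, 1 mod (d₂²/g)); in particular the class of (0,1) is sent to a generator of the second factor. -/

import Mathlib

/-!
Write `d₁ = g k` and `d₂ = g e`. The map `ℤ² → ℤ/g × ℤ/(g e²)`, `v ↦ (v₀, v₁ - m e v₀)`, is onto,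
and thanks to `m d₁ + n d₂ = g` its kernel is exactly the image of `M`: a kernel element
`(g s, g e² t + m e g s)` equals `M (n s - k t, m s + e t)`.
-/

open Matrix

section ShearReduce

variable (a b : ℕ) (c : ℤ)

def shearReduce : (Fin 2 → ℤ) →ₗ[ℤ] ZMod a × ZMod b :=
  ((Int.castAddHom (ZMod a)).toIntLinearMap ∘ₗ LinearMap.proj 0).prod
    ((Int.castAddHom (ZMod b)).toIntLinearMap ∘ₗ (c • LinearMap.proj 0 + LinearMap.proj 1))

@[simp]
theorem shearReduce_apply (v : Fin 2 → ℤ) :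
    shearReduce a b c v = ((v 0 : ZMod a), ((c * v 0 + v 1 : ℤ) : ZMod b)) := by
  simp [shearReduce]

theorem shearReduce_surjective : Function.Surjective (shearReduce a b c) := by
  rintro ⟨x, y⟩
  obtain ⟨p, rfl⟩ := ZMod.intCast_surjective x
  obtain ⟨q, rfl⟩ := ZMod.intCast_surjective y
  exact ⟨![p, q - c * p], by simp⟩

theorem mem_ker_shearReduce_iff (v : Fin 2 → ℤ) :
    v ∈ LinearMap.ker (shearReduce a b c) ↔ (a : ℤ) ∣ v 0 ∧ (b : ℤ) ∣ c * v 0 + v 1 := by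
  simp only [LinearMap.mem_ker, shearReduce_apply, Prod.mk_eq_zero,
    ZMod.intCast_zmod_eq_zero_iff_dvd]

end ShearReduce

/- `c` stands for `-(m d₂ / g)`; asking only `g c = -(m d₂)` avoids the junk division when
`g = 0`. -/
theorem mem_range_mulVecLin_iff_dvd {g k e m n c : ℤ} (hbez : m * (g * k) + n * (g * e) = g)
    (hc : g * c = -(m * (g * e))) (v : Fin 2 → ℤ) :
    v ∈ LinearMap.range (mulVecLin !![g * e, g * k; 0, g * e]) ↔
      g ∣ v 0 ∧ g * e ^ 2 ∣ c * v 0 + v 1 := by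
  simp only [LinearMap.mem_range, mulVecLin_apply, mulVec_fin_two, of_apply, cons_val',
    cons_val_zero, cons_val_one, empty_val', cons_val_fin_one, funext_iff, Fin.forall_fin_two]
  constructor
  · rintro ⟨w, hv₀, hv₁⟩
    rw [← hv₀, ← hv₁]
    exact ⟨⟨e * w 0 + k * w 1, by ring⟩,
      ⟨-(m * w 0) + n * w 1, by linear_combination (e * w 0 + k * w 1) * hc - e * w 1 * hbez⟩⟩
  · rintro ⟨⟨s, hs⟩, ⟨t, ht⟩⟩
    refine ⟨![n * s - k * t, m * s + e * t], ?_, ?_⟩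
    · simp only [cons_val_zero, cons_val_one]
      linear_combination hs.symm + s * hbez
    · simp only [cons_val_zero, cons_val_one]
      linear_combination ht.symm + s * hc + c * hs

theorem cokernel_iso_explicit_general (d₁ d₂ g m n : ℤ)
    (hg : g = Int.gcd d₁ d₂)
    (hbez : m * d₁ + n * d₂ = g) :
    ∃ φ : ((Fin 2 → ℤ) ⧸
        LinearMap.range (Matrix.mulVecLin (!![d₂, d₁; 0, d₂] : Matrix (Fin 2) (Fin 2) ℤ)))
        ≃ₗ[ℤ] ZMod g.toNat × ZMod (d₂ ^ 2 / g).toNat,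
      φ (Submodule.Quotient.mk ![1, 0]) =
        ((1 : ZMod g.toNat), ((-(m * d₂ / g) : ℤ) : ZMod (d₂ ^ 2 / g).toNat)) ∧
      φ (Submodule.Quotient.mk ![0, 1]) =
        ((0 : ZMod g.toNat), (1 : ZMod (d₂ ^ 2 / g).toNat)) := by
  have hg₀ : 0 ≤ g := hg ▸ Int.natCast_nonneg _
  obtain ⟨k, rfl⟩ : g ∣ d₁ := hg ▸ Int.gcd_dvd_left d₁ d₂
  obtain ⟨e, rfl⟩ : g ∣ d₂ := hg ▸ Int.gcd_dvd_right _ d₂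
  have hN : (g * e) ^ 2 / g = g * e ^ 2 := by
    rcases eq_or_ne g 0 with rfl | hg_ne
    · simp
    · rw [show (g * e) ^ 2 = g * (g * e ^ 2) by ring, Int.mul_ediv_cancel_left _ hg_ne]
  have hc : g * -(m * (g * e) / g) = -(m * (g * e)) := by
    rw [mul_neg, Int.mul_ediv_cancel' ((dvd_mul_right g e).mul_left m)]
  have hker : LinearMap.range (mulVecLin !![g * e, g * k; 0, g * e]) =
      LinearMap.ker (shearReduce g.toNat ((g * e) ^ 2 / g).toNat (-(m * (g * e) / g))) := by
    ext v
    rw [mem_range_mulVecLin_iff_dvd hbez hc, mem_ker_shearReduce_iff, hN,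
      Int.toNat_of_nonneg hg₀, Int.toNat_of_nonneg (by positivity)]
  refine ⟨(Submodule.quotEquivOfEq _ _ hker).trans
    ((shearReduce _ _ _).quotKerEquivOfSurjective (shearReduce_surjective _ _ _)), ?_, ?_⟩ <;>
    simp

/-- There is a `ℤ`-module isomorphism from the cokernel of `M = [[d₂,d₁],[0,d₂]]`
to `(ℤ/gℤ) × (ℤ/(d₂²/g)ℤ)` sending the class of `(1,0)` to
`(1 mod g, −(m·d₂/g) mod (d₂²/g))` and the class of `(0,1)` to `(0, 1 mod (d₂²/g))`. -/
theorem cokernel_iso_explicit (d₁ d₂ g m n : ℤ)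
    (hd₁ : d₁ ≠ 0) (hd₂ : d₂ ≠ 0)
    (hg : g = Int.gcd d₁ d₂) (hgpos : 0 < g)
    (hbez : m * d₁ + n * d₂ = g) :
    ∃ φ : ((Fin 2 → ℤ) ⧸
        LinearMap.range (Matrix.mulVecLin (!![d₂, d₁; 0, d₂] : Matrix (Fin 2) (Fin 2) ℤ)))
        ≃ₗ[ℤ] ZMod g.toNat × ZMod (d₂ ^ 2 / g).toNat,
      φ (Submodule.Quotient.mk ![1, 0]) =
        ((1 : ZMod g.toNat), ((-(m * d₂ / g) : ℤ) : ZMod (d₂ ^ 2 / g).toNat)) ∧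
      φ (Submodule.Quotient.mk ![0, 1]) =
        ((0 : ZMod g.toNat), (1 : ZMod (d₂ ^ 2 / g).toNat)) :=
  cokernel_iso_explicit_general d₁ d₂ g m n hg hbez
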